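/- arXiv:1605.04503 — 3 statements merged into one kernel-verified Lean document; each statement's English description precedes it below -/
import Mathlib

section
/- For all m ≥ 3, the kernel numbers satisfy k_m = k_{m-3} + t_{m-4}, where t is the Tribonacci number sequence. -/
/-- Tribonacci numbers, index-shifted so that `trib n` represents t_{n-2}:
`trib 0 = t₋₂ = 0`, `trib 1 = t₋₁ = 1`, `trib 2 = t₀ = 1`, and
`trib (n+3) = trib (n+2) + trib (n+1) + trib n`. -/
def trib : ℕ → ℕ
  | 0 => 0
  | 1 => 1
  | 2 => 1
  | n + 3 => trib (n + 2) + trib (n + 1) + trib n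

/-- Kernel numbers: k₀ = 0, k₁ = k₂ = 1, k_m = k_{m-1} + k_{m-2} + k_{m-3} - 1 for m ≥ 3. -/
def ker : ℕ → ℕ
  | 0 => 0
  | 1 => 1
  | 2 => 1
  | n + 3 => ker (n + 2) + ker (n + 1) + ker n - 1

/-!
Since `ker` is positive from index 1 on, its truncated `- 1` is a genuine subtraction, and it
cancels in the differences `ker (n + 3) - ker n`. These differences therefore satisfy the
Tribonacci recurrence, and their first three values `1, 1, 2` are `trib 1, trib 2, trib 3`.
-/

theorem one_le_ker_succ : ∀ n, 1 ≤ ker (n + 1)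
  | 0 | 1 => le_rfl
  | n + 2 => by
    have := one_le_ker_succ n
    have : 1 ≤ ker (n + 2) := one_le_ker_succ (n + 1)
    change 1 ≤ ker (n + 2) + ker (n + 1) + ker n - 1
    omega

theorem ker_add_three_add_one (n : ℕ) : ker (n + 3) + 1 = ker (n + 2) + ker (n + 1) + ker n := by
  have := one_le_ker_succ n
  change ker (n + 2) + ker (n + 1) + ker n - 1 + 1 = _
  omega

theorem ker_add_three : ∀ n, ker (n + 3) = ker n + trib (n + 1)
  | 0 | 1 | 2 => rfl
  | n + 3 => by
    have ih₀ := ker_add_three n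
    have ih₁ : ker (n + 4) = ker (n + 1) + trib (n + 2) := ker_add_three (n + 1)
    have ih₂ : ker (n + 5) = ker (n + 2) + trib (n + 3) := ker_add_three (n + 2)
    have rec₀ := ker_add_three_add_one n
    have rec₃ : ker (n + 6) + 1 = ker (n + 5) + ker (n + 4) + ker (n + 3) :=
      ker_add_three_add_one (n + 3)
    have trib_rec : trib (n + 4) = trib (n + 3) + trib (n + 2) + trib (n + 1) := rfl
    show ker (n + 6) = ker (n + 3) + trib (n + 4)
    omega

/-- For all m ≥ 3, k_m = k_{m-3} + t_{m-4}.  (Here `trib (m-2)` = t_{m-4}.) -/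
theorem kernel_eq_kernel_add_trib (m : ℕ) (hm : 3 ≤ m) :
    ker m = ker (m - 3) + trib (m - 2) := by
  obtain ⟨n, rfl⟩ := Nat.exists_eq_add_of_le' hm
  simpa using ker_add_three n
end

section
/- For all m ≥ 1, the sum of kernel numbers satisfies 2·∑_{i=1}^{m} k_i = k_m + k_{m+2} + m - 1. -/
/-! The recurrence `a (n+3) = a (n+2) + a (n+1) + a n - c` says exactly that
`a (n+1) + a (n+3) - (a n + a (n+2)) = 2 a (n+1) - c`, so `2 ∑ a i` telescopes. -/

theorem two_mul_sum_Icc_eq_of_add_three {R : Type*} [CommRing R] (a : ℕ → R) (c : R)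
    (ha : ∀ n, a (n + 3) = a (n + 2) + a (n + 1) + a n - c) (m : ℕ) :
    2 * ∑ i ∈ Finset.Icc 1 m, a i = a m + a (m + 2) + m * c - (a 0 + a 2) := by
  induction m with
  | zero => simp
  | succ m ih =>
    rw [Finset.sum_Icc_succ_top (by omega), mul_add, ih, show m + 1 + 2 = m + 3 from rfl, ha m]
    push_cast
    ring

theorem one_le_ker : ∀ {n : ℕ}, n ≠ 0 → 1 ≤ ker n
  | 1, _ | 2, _ => le_rfl
  | n + 3, _ => by
    have := one_le_ker (n := n + 2) (by omega)
    have := one_le_ker (n := n + 1) (by omega)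
    show 1 ≤ ker (n + 2) + ker (n + 1) + ker n - 1
    omega

theorem ker_add_three_cast (n : ℕ) :
    (ker (n + 3) : ℤ) = ker (n + 2) + ker (n + 1) + ker n - 1 := by
  have := one_le_ker (n := n + 1) (by omega)
  show ((ker (n + 2) + ker (n + 1) + ker n - 1 : ℕ) : ℤ) = _
  omega

theorem two_mul_sum_ker_general (m : ℕ) :
    2 * ∑ i ∈ Finset.Icc 1 m, (ker i : ℤ) =
      (ker m : ℤ) + ker (m + 2) + m - 1 := by
  rw [two_mul_sum_Icc_eq_of_add_three (fun n ↦ (ker n : ℤ)) 1 ker_add_three_cast m]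
  simp only [ker, Nat.cast_zero, Nat.cast_one]
  ring

/-- For all m ≥ 1, 2·∑_{i=1}^{m} k_i = k_m + k_{m+2} + m - 1 (stated over ℤ). -/
theorem two_mul_sum_ker (m : ℕ) (hm : 1 ≤ m) :
    2 * ∑ i ∈ Finset.Icc 1 m, (ker i : ℤ) =
      (ker m : ℤ) + ker (m + 2) + m - 1 :=
  two_mul_sum_ker_general m
end

section
/- For every m ≥ 0, the Tribonacci word contains a square of length 2·t_m; concretely, the word T_m T_m is a factor of the infinite Tribonacci sequence 𝕋 (equivalently, a factor of T_{m+5}). -/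
inductive Alpha | a | b | c
  deriving DecidableEq, Repr

/-- The Tribonacci substitution σ(a) = ab, σ(b) = ac, σ(c) = a. -/
def sub : Alpha → List Alpha
  | .a => [.a, .b]
  | .b => [.a, .c]
  | .c => [.a]

/-- T_m = σ^m(a). -/
def T (m : ℕ) : List Alpha := (fun w => w.flatMap sub)^[m] [.a]

/-!
`σ^m` is an endomorphism of the free monoid, so it maps factors to factors. Applied to the
factor `aa` of `T 5 = abacabaabacab` it yields the factor `σ^m(a) σ^m(a) = T m ++ T m` of
`σ^m(T 5) = T (m + 5)`.
-/

namespace List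

variable {α : Type*}

theorem iterate_flatMap_append (f : α → List α) (m : ℕ) (l₁ l₂ : List α) :
    (fun l => l.flatMap f)^[m] (l₁ ++ l₂) =
      (fun l => l.flatMap f)^[m] l₁ ++ (fun l => l.flatMap f)^[m] l₂ := by
  induction m with
  | zero => rfl
  | succ m ih => simp only [Function.iterate_succ_apply', ih, flatMap_append]

theorem IsInfix.iterate_flatMap {l₁ l₂ : List α} (h : l₁ <:+: l₂) (f : α → List α)
    (m : ℕ) :
    (fun l => l.flatMap f)^[m] l₁ <:+: (fun l => l.flatMap f)^[m] l₂ := by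
  induction m with
  | zero => exact h
  | succ m ih => simpa only [Function.iterate_succ_apply'] using ih.flatMap f

end List

theorem T_add (m n : ℕ) : T (m + n) = (fun l => l.flatMap sub)^[m] (T n) :=
  Function.iterate_add_apply _ m n _

/-- For every m ≥ 0, the square T_m T_m (of length 2·t_m) occurs in the Tribonacci
sequence; concretely it is a factor of T_{m+5}. -/
theorem square_Tm_infix (m : ℕ) : (T m ++ T m) <:+: T (m + 5) := by
  have hT5 : [Alpha.a] ++ [Alpha.a] <:+: T 5 := by decide
  have := List.IsInfix.iterate_flatMap hT5 sub m
  rwa [List.iterate_flatMap_append, ← T_add] at this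
end
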